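/- (PMEM-protection FSM satisfies LTL(6).) Consider the two-state Mealy machine of Figure 5 with states {RUN, RESET}, input alphabet consisting of tuples in(t) = (PC(t), W_en(t), D_addr(t), DMA_en(t), DMA_addr(t)), violation predicate V(t) := (PC(t) ∉ TCB ∧ W_en(t) ∧ D_addr(t) ∈ PMEM) ∨ (DMA_en(t) ∧ DMA_addr(t) ∈ PMEM), transition function δ(RUN, in) = RESET if V holds and RUN otherwise, δ(RESET, in) = RUN if PC = 0 and RESET otherwise, state trace q(t+1) = δ(q(t), in(t)), and output reset(t) := (δ(q(t), in(t)) = RESET). Suppose that whenever PC(t) = 0 the violation predicate V(t) is false. Then for every initial state q(0) and every input trace, the output satisfies LTL(6): for every time t, V(t) implies reset(t). -/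
import Mathlib


/-- States of the two-state PMEM-protection Mealy machine of Figure 5. -/
inductive PmemState
  | RUN
  | RESET
deriving DecidableEq

open Classical in
/-- Transition function of the Mealy machine of Figure 5, parameterized by the
violation predicate `V` and the condition `PC = 0` at the current cycle. -/
noncomputable def pmemDelta (V pcZero : Prop) : PmemState → PmemState
  | .RUN => if V then .RESET else .RUN
  | .RESET => if pcZero then .RUN else .RESET

/-- (PMEM-protection FSM satisfies LTL(6).) -/
theorem pmem_fsm_satisfies_LTL6
    (PMEM TCB : Set ℕ)
    (PC D_addr DMA_addr : ℕ → ℕ)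
    (W_en DMA_en : ℕ → Prop)
    (q : ℕ → PmemState)
    -- violation predicate V(t)
    (V : ℕ → Prop)
    (hV : ∀ t, V t ↔ (PC t ∉ TCB ∧ W_en t ∧ D_addr t ∈ PMEM) ∨
                     (DMA_en t ∧ DMA_addr t ∈ PMEM))
    -- state trace: q(t+1) = δ(q(t), in(t))
    (hstep : ∀ t, q (t + 1) = pmemDelta (V t) (PC t = 0) (q t))
    -- whenever PC(t) = 0 the violation predicate is false
    (hzero : ∀ t, PC t = 0 → ¬ V t) :
    -- output reset(t) := (δ(q(t), in(t)) = RESET) satisfies LTL(6)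
    ∀ t, V t → pmemDelta (V t) (PC t = 0) (q t) = PmemState.RESET := by
  intro t hv
  cases h : q t <;> simp [pmemDelta, hv] <;> exact fun h0 => hzero t h0 hv
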